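/- Let {f_{j,1,n}} and {f_{j,2,n}} be two linearly independent sequences in H_j for j = 1, 2. Suppose F = {f_{1,1,m} ⊗ f_{2,1,n} + f_{1,2,m} ⊗ f_{2,2,n}}_{m,n} is a frame for H₁ ⊗ H₂ and suppose {f_{2,2,n}} is not a frame for H₂. Then {f_{1,1,m}} is a frame for H₁. -/

import Mathlib

/-- A structure witnessing that `T` is the Hilbert space tensor product of `H` and `K`:
a bilinear map `tmul` whose inner products multiply and whose range spans a dense subspace. -/
structure HilbertTensorProduct (H K T : Type*)
    [NormedAddCommGroup H] [InnerProductSpace ℂ H]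
    [NormedAddCommGroup K] [InnerProductSpace ℂ K]
    [NormedAddCommGroup T] [InnerProductSpace ℂ T] [CompleteSpace T] where
  tmul : H →ₗ[ℂ] K →ₗ[ℂ] T
  inner_tmul : ∀ (x x' : H) (y y' : K),
    (inner ℂ (tmul x y) (tmul x' y') : ℂ) = (inner ℂ x x' : ℂ) * (inner ℂ y y' : ℂ)
  dense_span : Dense
    ((Submodule.span ℂ (Set.range fun p : H × K => tmul p.1 p.2) : Submodule ℂ T) : Set T)

/-- `f` is a Bessel sequence in `H`. -/
def IsBessel {H : Type*} [NormedAddCommGroup H] [InnerProductSpace ℂ H] {ι : Type*}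
    (f : ι → H) : Prop :=
  ∃ B : ℝ, 0 < B ∧ ∀ x : H,
    Summable (fun i => ‖(inner ℂ (f i) x : ℂ)‖ ^ 2) ∧
    ∑' i, ‖(inner ℂ (f i) x : ℂ)‖ ^ 2 ≤ B * ‖x‖ ^ 2

/-- `f` is a frame for `H`. -/
def IsFrame {H : Type*} [NormedAddCommGroup H] [InnerProductSpace ℂ H] {ι : Type*}
    (f : ι → H) : Prop :=
  ∃ A B : ℝ, 0 < A ∧ 0 < B ∧ ∀ x : H,
    Summable (fun i => ‖(inner ℂ (f i) x : ℂ)‖ ^ 2) ∧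
    A * ‖x‖ ^ 2 ≤ ∑' i, ‖(inner ℂ (f i) x : ℂ)‖ ^ 2 ∧
    ∑' i, ‖(inner ℂ (f i) x : ℂ)‖ ^ 2 ≤ B * ‖x‖ ^ 2

/-! Pairing the frame with elementary tensors `x ⊗ y` shows that for every `(n, y)` the sequence
`m ↦ ⟪y, f₂₁ n⟫ • f₁₁ m + ⟪y, f₂₂ n⟫ • f₁₂ m` is Bessel. Bessel sequences form a vector space,
and by linear independence of `f₂₁, f₂₂` the coefficient vectors `(⟪y, f₂₁ n⟫, ⟪y, f₂₂ n⟫)` span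
`ℂ²`, so `f₁₁` and `f₁₂` are Bessel; symmetrically so are `f₂₁` and `f₂₂`.
With `‖Θᵢⱼ x‖² = ∑ₖ |⟪fᵢⱼ k, x⟫|²`, the lower frame bound at `x ⊗ y` gives
`A ‖x‖² ‖y‖² ≤ 2 ‖Θ₁₁ x‖² ‖Θ₂₁ y‖² + 2 ‖Θ₁₂ x‖² ‖Θ₂₂ y‖²`.
Since `f₂₂` is Bessel but not a frame, some `y` makes `‖Θ₂₂ y‖² / ‖y‖²` so small that the second
term is at most half the left side; dividing by `‖y‖²` leaves a lower frame bound for `f₁₁`. -/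

open scoped InnerProductSpace

theorem norm_add_sq_le_two_mul {E : Type*} [SeminormedAddCommGroup E] (a b : E) :
    ‖a + b‖ ^ 2 ≤ 2 * ‖a‖ ^ 2 + 2 * ‖b‖ ^ 2 :=
  (pow_le_pow_left₀ (norm_nonneg _) (norm_add_le a b) 2).trans <| by
    linarith [add_sq_le (a := ‖a‖) (b := ‖b‖)]

section Bessel

variable {ι κ H T : Type*} [NormedAddCommGroup H] [InnerProductSpace ℂ H]

noncomputable def analysisNormSq (f : ι → H) (x : H) : ℝ := ∑' i, ‖⟪f i, x⟫_ℂ‖ ^ 2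

theorem analysisNormSq_nonneg (f : ι → H) (x : H) : 0 ≤ analysisNormSq f x :=
  tsum_nonneg fun _ => by positivity

theorem isBessel_of_forall_le {f : ι → H} (B : ℝ)
    (hf : ∀ x, Summable (fun i => ‖⟪f i, x⟫_ℂ‖ ^ 2) ∧ analysisNormSq f x ≤ B * ‖x‖ ^ 2) :
    IsBessel f :=
  ⟨max B 1, by positivity, fun x => ⟨(hf x).1, (hf x).2.trans (by gcongr; exact le_max_left _ _)⟩⟩

theorem IsBessel.summable {f : ι → H} (hf : IsBessel f) (x : H) :
    Summable fun i => ‖⟪f i, x⟫_ℂ‖ ^ 2 :=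
  let ⟨_, _, h⟩ := hf
  (h x).1

theorem IsFrame.isBessel {f : ι → H} (hf : IsFrame f) : IsBessel f :=
  let ⟨_, B, _, hB, h⟩ := hf
  ⟨B, hB, fun x => ⟨(h x).1, (h x).2.2⟩⟩

theorem IsBessel.zero : IsBessel (0 : ι → H) :=
  isBessel_of_forall_le 0 fun x => by simp [analysisNormSq]

theorem IsBessel.add {f g : ι → H} (hf : IsBessel f) (hg : IsBessel g) : IsBessel (f + g) := by
  obtain ⟨B, -, hf⟩ := hf
  obtain ⟨B', -, hg⟩ := hg
  have hle : ∀ x i, ‖⟪(f + g) i, x⟫_ℂ‖ ^ 2 ≤ 2 * ‖⟪f i, x⟫_ℂ‖ ^ 2 + 2 * ‖⟪g i, x⟫_ℂ‖ ^ 2 :=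
    fun x i => by rw [Pi.add_apply, inner_add_left]; exact norm_add_sq_le_two_mul _ _
  refine isBessel_of_forall_le (2 * B + 2 * B') fun x => ?_
  have hsum := ((hf x).1.mul_left 2).add ((hg x).1.mul_left 2)
  have hsum' := hsum.of_nonneg_of_le (fun _ => by positivity) (hle x)
  refine ⟨hsum', ?_⟩
  calc analysisNormSq (f + g) x
      ≤ ∑' i, (2 * ‖⟪f i, x⟫_ℂ‖ ^ 2 + 2 * ‖⟪g i, x⟫_ℂ‖ ^ 2) := hsum'.tsum_le_tsum (hle x) hsum
    _ = 2 * analysisNormSq f x + 2 * analysisNormSq g x := by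
      rw [((hf x).1.mul_left 2).tsum_add ((hg x).1.mul_left 2), tsum_mul_left, tsum_mul_left]
      rfl
    _ ≤ (2 * B + 2 * B') * ‖x‖ ^ 2 := by unfold analysisNormSq; linarith [(hf x).2, (hg x).2]

theorem IsBessel.const_smul {f : ι → H} (hf : IsBessel f) (c : ℂ) : IsBessel (c • f) := by
  obtain ⟨B, -, hf⟩ := hf
  have heq : ∀ x, (fun i => ‖⟪(c • f) i, x⟫_ℂ‖ ^ 2) = fun i => ‖c‖ ^ 2 * ‖⟪f i, x⟫_ℂ‖ ^ 2 := by
    intro x; ext i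
    rw [Pi.smul_apply, inner_smul_left, norm_mul, RCLike.norm_conj, mul_pow]
  refine isBessel_of_forall_le (‖c‖ ^ 2 * B) fun x => ?_
  rw [analysisNormSq, heq, tsum_mul_left, mul_assoc]
  exact ⟨(hf x).1.mul_left _, by gcongr; exact (hf x).2⟩

variable (ι H) in
def besselSubmodule : Submodule ℂ (ι → H) where
  carrier := {f | IsBessel f}
  zero_mem' := IsBessel.zero
  add_mem' := IsBessel.add
  smul_mem' c _ hf := hf.const_smul c

@[simp]
theorem mem_besselSubmodule {f : ι → H} : f ∈ besselSubmodule ι H ↔ IsBessel f :=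
  Iff.rfl

theorem IsBessel.comp_injective {f : ι → H} (hf : IsBessel f) {e : κ → ι}
    (he : Function.Injective e) : IsBessel (f ∘ e) := by
  obtain ⟨B, hB, hf⟩ := hf
  refine ⟨B, hB, fun x => ⟨(hf x).1.comp_injective he, ?_⟩⟩
  exact (tsum_comp_le_tsum_of_inj (hf x).1 (fun _ => by positivity) he).trans (hf x).2

variable [NormedAddCommGroup T] [InnerProductSpace ℂ T]

theorem IsBessel.of_inner_eq_inner {g : ι → T} (hg : IsBessel g) {f : ι → H} (L : H → T)
    (C : ℝ) (hL : ∀ x, ‖L x‖ ≤ C * ‖x‖) (hfg : ∀ i x, ⟪f i, x⟫_ℂ = ⟪g i, L x⟫_ℂ) :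
    IsBessel f := by
  obtain ⟨B, hB, hg⟩ := hg
  refine isBessel_of_forall_le (B * C ^ 2) fun x => ?_
  simp only [analysisNormSq, hfg]
  refine ⟨(hg (L x)).1, (hg (L x)).2.trans ?_⟩
  rw [mul_assoc, ← mul_pow]
  gcongr
  exact hL x

theorem IsBessel.exists_analysisNormSq_le {f : ι → H} (hf : IsBessel f) :
    ∃ B, 0 < B ∧ ∀ x, analysisNormSq f x ≤ B * ‖x‖ ^ 2 :=
  let ⟨B, hB, h⟩ := hf
  ⟨B, hB, fun x => (h x).2⟩

theorem IsBessel.isFrame_of_forall_le {f : ι → H} (hf : IsBessel f) {A : ℝ} (hA : 0 < A)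
    (hlow : ∀ x, A * ‖x‖ ^ 2 ≤ analysisNormSq f x) : IsFrame f :=
  let ⟨B, hB, h⟩ := hf
  ⟨A, B, hA, hB, fun x => ⟨(h x).1, hlow x, (h x).2⟩⟩

theorem IsBessel.exists_lt_of_not_isFrame {f : ι → H} (hf : IsBessel f) (hnf : ¬IsFrame f)
    {ε : ℝ} (hε : 0 < ε) : ∃ y, analysisNormSq f y < ε * ‖y‖ ^ 2 := by
  obtain ⟨B, hB, hf⟩ := hf
  by_contra! hlow
  exact hnf ⟨ε, B, hε, hB, fun y => ⟨(hf y).1, hlow y, (hf y).2⟩⟩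

end Bessel

section LinearAlgebra

variable {H K ι κ s : Type*} [NormedAddCommGroup H] [InnerProductSpace ℂ H]
  [NormedAddCommGroup K] [InnerProductSpace ℂ K] [Fintype s]

theorem span_range_inner_eq_top_of_linearIndependent {v : s → κ → K}
    (hv : LinearIndependent ℂ v) :
    Submodule.span ℂ (Set.range fun p : κ × K => fun i => ⟪p.2, v i p.1⟫_ℂ) = ⊤ := by
  classical
  set W := Submodule.span ℂ (Set.range fun p : κ × K => fun i => ⟪p.2, v i p.1⟫_ℂ)
  by_contra hne
  obtain ⟨φ, hφ, hφW⟩ :=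
    Submodule.exists_dual_map_eq_bot_of_lt_top (lt_top_iff_ne_top.2 hne) inferInstance
  set c : s → ℂ := fun i => φ fun j => if i = j then 1 else 0
  have hφc : ∀ w, φ w = ∑ i, c i * w i := fun w => by
    simp only [LinearMap.pi_apply_eq_sum_univ φ w, smul_eq_mul, mul_comm, c]
  have hcomb : ∑ i, c i • v i = 0 := by
    ext k
    refine ext_inner_left ℂ fun y => ?_
    have hmem : φ (fun i => ⟪y, v i k⟫_ℂ) ∈ W.map φ :=
      Submodule.mem_map_of_mem (Submodule.subset_span ⟨(k, y), rfl⟩)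
    rw [hφW, Submodule.mem_bot, hφc] at hmem
    simpa [Finset.sum_apply, inner_sum, inner_smul_right] using hmem
  have hc : c = 0 := funext (Fintype.linearIndependent_iff.1 hv c hcomb)
  exact hφ (LinearMap.ext fun w => by simp [hφc, hc])

theorem isBessel_of_isBessel_sum_inner_smul {u : s → ι → H} {v : s → κ → K}
    (hv : LinearIndependent ℂ v) (h : ∀ k y, IsBessel fun m => ∑ i, ⟪y, v i k⟫_ℂ • u i m)
    (i : s) : IsBessel (u i) := by
  classical
  have hle : Submodule.span ℂ (Set.range fun p : κ × K => fun i => ⟪p.2, v i p.1⟫_ℂ) ≤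
      (besselSubmodule ι H).comap (Fintype.linearCombination ℂ u) := by
    rw [Submodule.span_le]
    rintro _ ⟨⟨k, y⟩, rfl⟩
    rw [SetLike.mem_coe, Submodule.mem_comap, mem_besselSubmodule]
    convert h k y using 1
    ext m
    simp [Fintype.linearCombination_apply, Finset.sum_apply]
  rw [span_range_inner_eq_top_of_linearIndependent hv, top_le_iff] at hle
  have hi : Pi.single i 1 ∈ (besselSubmodule ι H).comap (Fintype.linearCombination ℂ u) :=
    hle ▸ Submodule.mem_top
  simpa using hi

end LinearAlgebra

theorem tsum_norm_mul_add_mul_sq_le {ι κ : Type*} {a c : ι → ℂ} {b d : κ → ℂ}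
    (ha : Summable fun m => ‖a m‖ ^ 2) (hb : Summable fun n => ‖b n‖ ^ 2)
    (hc : Summable fun m => ‖c m‖ ^ 2) (hd : Summable fun n => ‖d n‖ ^ 2) :
    ∑' p : ι × κ, ‖a p.1 * b p.2 + c p.1 * d p.2‖ ^ 2 ≤
      2 * ((∑' m, ‖a m‖ ^ 2) * ∑' n, ‖b n‖ ^ 2) + 2 * ((∑' m, ‖c m‖ ^ 2) * ∑' n, ‖d n‖ ^ 2) := by
  have hab := ha.mul_of_nonneg hb (fun _ => by positivity) (fun _ => by positivity)
  have hcd := hc.mul_of_nonneg hd (fun _ => by positivity) (fun _ => by positivity)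
  have hle : ∀ p : ι × κ, ‖a p.1 * b p.2 + c p.1 * d p.2‖ ^ 2 ≤
      2 * (‖a p.1‖ ^ 2 * ‖b p.2‖ ^ 2) + 2 * (‖c p.1‖ ^ 2 * ‖d p.2‖ ^ 2) := fun p => by
    simpa only [norm_mul, mul_pow] using norm_add_sq_le_two_mul (a p.1 * b p.2) (c p.1 * d p.2)
  have hsum := (hab.mul_left 2).add (hcd.mul_left 2)
  calc ∑' p : ι × κ, ‖a p.1 * b p.2 + c p.1 * d p.2‖ ^ 2
      ≤ ∑' p : ι × κ, (2 * (‖a p.1‖ ^ 2 * ‖b p.2‖ ^ 2) + 2 * (‖c p.1‖ ^ 2 * ‖d p.2‖ ^ 2)) :=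
        (hsum.of_nonneg_of_le (fun _ => by positivity) hle).tsum_le_tsum hle hsum
    _ = _ := by
      rw [(hab.mul_left 2).tsum_add (hcd.mul_left 2), tsum_mul_left, tsum_mul_left,
        ha.tsum_mul_tsum hb hab, hc.tsum_mul_tsum hd hcd]

namespace HilbertTensorProduct

variable {H K T ι κ s : Type*} [NormedAddCommGroup H] [InnerProductSpace ℂ H]
  [NormedAddCommGroup K] [InnerProductSpace ℂ K]
  [NormedAddCommGroup T] [InnerProductSpace ℂ T] [CompleteSpace T]
  (P : HilbertTensorProduct H K T)

theorem norm_tmul (x : H) (y : K) : ‖P.tmul x y‖ = ‖x‖ * ‖y‖ := by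
  have h := P.inner_tmul x x y y
  simp only [inner_self_eq_norm_sq_to_K] at h
  rw [← pow_left_inj₀ (norm_nonneg _) (by positivity) two_ne_zero, mul_pow]
  exact_mod_cast h

theorem inner_sum_tmul_tmul [Fintype s] (a : s → H) (b : s → K) (x : H) (y : K) :
    ⟪∑ i, P.tmul (a i) (b i), P.tmul x y⟫_ℂ = ∑ i, ⟪a i, x⟫_ℂ * ⟪b i, y⟫_ℂ := by
  simp only [sum_inner, P.inner_tmul]

theorem lower_bound_mul_le_analysisNormSq {a c : ι → H} {b d : κ → K} (ha : IsBessel a)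
    (hb : IsBessel b) (hc : IsBessel c) (hd : IsBessel d) {A : ℝ}
    (hA : ∀ z, A * ‖z‖ ^ 2 ≤
      analysisNormSq (fun p : ι × κ => P.tmul (a p.1) (b p.2) + P.tmul (c p.1) (d p.2)) z)
    (x : H) (y : K) :
    A * (‖x‖ ^ 2 * ‖y‖ ^ 2) ≤
      2 * (analysisNormSq a x * analysisNormSq b y) +
        2 * (analysisNormSq c x * analysisNormSq d y) := by
  have h := hA (P.tmul x y)
  simp only [analysisNormSq, inner_add_left, P.inner_tmul, P.norm_tmul, mul_pow] at h ⊢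
  exact h.trans <| tsum_norm_mul_add_mul_sq_le (a := fun m => ⟪a m, x⟫_ℂ)
    (b := fun n => ⟪b n, y⟫_ℂ) (c := fun m => ⟪c m, x⟫_ℂ) (d := fun n => ⟪d n, y⟫_ℂ)
    (ha.summable x) (hb.summable y) (hc.summable x) (hd.summable y)

variable [Fintype s] {u : s → ι → H} {v : s → κ → K}
  (hF : IsBessel fun p : ι × κ => ∑ i, P.tmul (u i p.1) (v i p.2))
include hF

theorem isBessel_sum_inner_smul_left (n : κ) (y : K) :
    IsBessel fun m => ∑ i, ⟪y, v i n⟫_ℂ • u i m := by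
  refine (hF.comp_injective (e := fun m => (m, n)) fun _ _ h => congrArg Prod.fst h)
    |>.of_inner_eq_inner (fun x => P.tmul x y) ‖y‖ (fun x => (P.norm_tmul x y).trans_le
      (mul_comm ‖x‖ ‖y‖).le) fun m x => ?_
  simp only [Function.comp_apply, P.inner_sum_tmul_tmul, sum_inner, inner_smul_left,
    inner_conj_symm, mul_comm]

theorem isBessel_sum_inner_smul_right (m : ι) (x : H) :
    IsBessel fun n => ∑ i, ⟪x, u i m⟫_ℂ • v i n := by
  refine (hF.comp_injective (e := fun n => (m, n)) fun _ _ h => congrArg Prod.snd h)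
    |>.of_inner_eq_inner (fun y => P.tmul x y) ‖x‖ (fun y => (P.norm_tmul x y).le) fun n y => ?_
  simp only [Function.comp_apply, P.inner_sum_tmul_tmul, sum_inner, inner_smul_left,
    inner_conj_symm]

theorem isBessel_left (hv : LinearIndependent ℂ v) (i : s) : IsBessel (u i) :=
  isBessel_of_isBessel_sum_inner_smul hv (P.isBessel_sum_inner_smul_left hF) i

theorem isBessel_right (hu : LinearIndependent ℂ u) (i : s) : IsBessel (v i) :=
  isBessel_of_isBessel_sum_inner_smul hu (P.isBessel_sum_inner_smul_right hF) i

end HilbertTensorProduct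

theorem frame_component_of_sum_of_two_tensors_general
    {H₁ H₂ T : Type*}
    [NormedAddCommGroup H₁] [InnerProductSpace ℂ H₁]
    [NormedAddCommGroup H₂] [InnerProductSpace ℂ H₂]
    [NormedAddCommGroup T] [InnerProductSpace ℂ T] [CompleteSpace T]
    (P : HilbertTensorProduct H₁ H₂ T)
    (f₁₁ f₁₂ : ℕ → H₁) (f₂₁ f₂₂ : ℕ → H₂)
    (hind₁ : LinearIndependent ℂ ![f₁₁, f₁₂])
    (hind₂ : LinearIndependent ℂ ![f₂₁, f₂₂])
    (hF : IsFrame (fun p : ℕ × ℕ =>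
      P.tmul (f₁₁ p.1) (f₂₁ p.2) + P.tmul (f₁₂ p.1) (f₂₂ p.2)))
    (hnot : ¬ IsFrame f₂₂) :
    IsFrame f₁₁ := by
  have hFsum : IsBessel fun p : ℕ × ℕ => ∑ i, P.tmul (![f₁₁, f₁₂] i p.1) (![f₂₁, f₂₂] i p.2) := by
    simpa [Fin.sum_univ_two] using hF.isBessel
  have h₁₁ : IsBessel f₁₁ := P.isBessel_left hFsum hind₂ 0
  have h₁₂ : IsBessel f₁₂ := P.isBessel_left hFsum hind₂ 1
  have h₂₁ : IsBessel f₂₁ := P.isBessel_right hFsum hind₁ 0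
  have h₂₂ : IsBessel f₂₂ := P.isBessel_right hFsum hind₁ 1
  obtain ⟨A, _, hA, -, hAF⟩ := hF
  obtain ⟨B₁₂, hB₁₂, hbd₁₂⟩ := h₁₂.exists_analysisNormSq_le
  obtain ⟨B₂₁, hB₂₁, hbd₂₁⟩ := h₂₁.exists_analysisNormSq_le
  -- `ε` is chosen so that the `f₁₂ ⊗ f₂₂` term costs at most half of the lower bound `A`
  obtain ⟨y, hy⟩ := h₂₂.exists_lt_of_not_isFrame hnot (ε := A / (4 * B₁₂)) (by positivity)
  rw [div_mul_eq_mul_div, lt_div_iff₀ (by positivity)] at hy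
  have hy₀ : 0 < ‖y‖ ^ 2 := by nlinarith [analysisNormSq_nonneg f₂₂ y]
  refine h₁₁.isFrame_of_forall_le (A := A / (4 * B₂₁)) (by positivity) fun x => ?_
  have hxy := P.lower_bound_mul_le_analysisNormSq h₁₁ h₂₁ h₁₂ h₂₂ (fun z => (hAF z).2.1) x y
  have hxy' : A * ‖x‖ ^ 2 * ‖y‖ ^ 2 ≤ 4 * B₂₁ * analysisNormSq f₁₁ x * ‖y‖ ^ 2 := by
    nlinarith [mul_le_mul_of_nonneg_left (hbd₂₁ y) (analysisNormSq_nonneg f₁₁ x),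
      mul_le_mul_of_nonneg_right (hbd₁₂ x) (analysisNormSq_nonneg f₂₂ y),
      mul_le_mul_of_nonneg_left hy.le (sq_nonneg ‖x‖)]
  rw [div_mul_eq_mul_div, div_le_iff₀ (by positivity)]
  linarith [le_of_mul_le_mul_right hxy' hy₀]

/-- If {f₁₁ₘ ⊗ f₂₁ₙ + f₁₂ₘ ⊗ f₂₂ₙ} is a frame and {f₂₂ₙ} is not a frame, then {f₁₁ₘ}
is a frame. -/
theorem frame_component_of_sum_of_two_tensors
    {H₁ H₂ T : Type*}
    [NormedAddCommGroup H₁] [InnerProductSpace ℂ H₁] [CompleteSpace H₁] [TopologicalSpace.SeparableSpace H₁]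
    [NormedAddCommGroup H₂] [InnerProductSpace ℂ H₂] [CompleteSpace H₂] [TopologicalSpace.SeparableSpace H₂]
    [NormedAddCommGroup T] [InnerProductSpace ℂ T] [CompleteSpace T] [TopologicalSpace.SeparableSpace T]
    (P : HilbertTensorProduct H₁ H₂ T)
    (f₁₁ f₁₂ : ℕ → H₁) (f₂₁ f₂₂ : ℕ → H₂)
    (hind₁ : LinearIndependent ℂ ![f₁₁, f₁₂])
    (hind₂ : LinearIndependent ℂ ![f₂₁, f₂₂])
    (hF : IsFrame (fun p : ℕ × ℕ =>
      P.tmul (f₁₁ p.1) (f₂₁ p.2) + P.tmul (f₁₂ p.1) (f₂₂ p.2)))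
    (hnot : ¬ IsFrame f₂₂) :
    IsFrame f₁₁ :=
  frame_component_of_sum_of_two_tensors_general P f₁₁ f₁₂ f₂₁ f₂₂ hind₁ hind₂ hF hnot
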